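/- (Corollary.) In the setting of the bound on the Shapley value after replication — N finite with |N| = M, i ∈ N, i' ∉ N, N^R = N ∪ {i'}, v : Finset N^R → ℝ supermodular with v(N) > 0, and v(S ∪ {i}) − v(S) ≤ a_i for every S ⊆ N^R \ {i} with i' ∈ S — if additionally a_i = 0 and v(N^R) = v(N), then the normalized Shapley value of i after replication is at most half its value before replication: φ^R(i) ≤ φ(i)/2. -/

import Mathlib

/-!
After replication, a marginal contribution of `i` to a coalition containing the replica `i'` is
at most `a_i = 0`, so `φ^R(i)` is bounded by the part of its sum over coalitions `S ⊆ N \ {i}`.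
With `n = |N| - 1` and `s = |S|`, the weight `s!(n+1-s)!/(n+2)!` of such a coalition in `N^R`
is half its weight `s!(n-s)!/(n+1)!` in `N` minus `s!(n-s)!(2s-n)/(2(n+2)!)`. It suffices that
`∑_S s!(n-s)!(2s-n)Δ(S) ≥ 0` for the marginal contribution `Δ(S) = v(S ∪ {i}) - v(S)`.
Supermodularity makes `Δ` monotone, hence the average of `Δ` over `s`-coalitions increases
with `s`, while the coefficients `2s - n` sum to zero; Chebyshev's sum inequality concludes.
-/

open Finset

/-- The normalized Shapley value of party `i` for the characteristic function `v`
in the market `market` with `m = |market|` parties: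
`φ(v,i) = (1/v(market)) · Σ_{S ⊆ market \ {i}} (|S|!(m−|S|−1)!/m!) · (v(S∪{i}) − v(S))`. -/
noncomputable def shapley {ι : Type*} [DecidableEq ι] (market : Finset ι)
    (v : Finset ι → ℝ) (i : ι) : ℝ :=
  (1 / v market) * ∑ S ∈ (market.erase i).powerset,
    (S.card.factorial * (market.card - S.card - 1).factorial : ℝ)
      / (market.card.factorial : ℝ) * (v (insert i S) - v S)

open scoped Nat

theorem sum_range_two_mul_sub_mul_nonneg {h : ℕ → ℝ} (n : ℕ) (hh : MonotoneOn h (Set.Iic n)) :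
    0 ≤ ∑ s ∈ range (n + 1), (2 * s - n : ℝ) * h s := by
  have hrange : (↑(range (n + 1)) : Set ℕ) = Set.Iic n := by
    ext s; simp
  have hcoeff : MonotoneOn (fun s : ℕ => (2 * s - n : ℝ)) (Set.Iic n) :=
    fun a _ b _ hab => by dsimp only; gcongr
  have hchebyshev := MonovaryOn.sum_mul_sum_le_card_mul_sum
    (f := fun s : ℕ => (2 * s - n : ℝ)) (g := h) (s := range (n + 1))
    (hrange ▸ hcoeff.monovaryOn hh)
  have hcentered : ∑ s ∈ range (n + 1), (2 * s - n : ℝ) = 0 := by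
    have hgauss : (∑ s ∈ range (n + 1), (s : ℝ)) * 2 = (n + 1) * n := by
      rw [← Nat.cast_sum]
      exact_mod_cast sum_range_id_mul_two (n + 1)
    rw [sum_sub_distrib, ← mul_sum, sum_const, card_range, nsmul_eq_mul]
    push_cast
    linarith
  rw [hcentered, zero_mul, card_range] at hchebyshev
  exact nonneg_of_mul_nonneg_right hchebyshev (by positivity)

section LevelSums

variable {α : Type*} [DecidableEq α]

theorem Finset.succ_nsmul_sum_powersetCard_succ {M : Type*} [AddCommMonoid M] (E : Finset α)
    (s : ℕ) (f : Finset α → M) :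
    (s + 1) • ∑ S ∈ E.powersetCard (s + 1), f S =
      ∑ T ∈ E.powersetCard s, ∑ x ∈ E \ T, f (insert x T) := by
  have hcard : ∀ S ∈ E.powersetCard (s + 1), (s + 1) • f S = ∑ _x ∈ S, f S := by
    intro S hS
    rw [sum_const, (mem_powersetCard.1 hS).2]
  rw [smul_sum, sum_congr rfl hcard, sum_sigma', sum_sigma']
  refine sum_nbij' (fun p => ⟨p.1.erase p.2, p.2⟩) (fun p => ⟨insert p.2 p.1, p.2⟩)
    ?_ ?_ ?_ ?_ ?_
  · rintro ⟨S, x⟩ hp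
    simp only [mem_sigma, mem_powersetCard] at hp ⊢
    obtain ⟨⟨hSE, hScard⟩, hxS⟩ := hp
    refine ⟨⟨(erase_subset _ _).trans hSE, by rw [card_erase_of_mem hxS, hScard]; rfl⟩, ?_⟩
    simp [hSE hxS]
  · rintro ⟨T, x⟩ hp
    simp only [mem_sigma, mem_powersetCard, mem_sdiff] at hp ⊢
    obtain ⟨⟨hTE, hTcard⟩, hxE, hxT⟩ := hp
    exact ⟨⟨insert_subset hxE hTE, by rw [card_insert_of_notMem hxT, hTcard]⟩, mem_insert_self _ _⟩
  · rintro ⟨S, x⟩ hp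
    simp [insert_erase (mem_sigma.1 hp).2]
  · rintro ⟨T, x⟩ hp
    simp [erase_insert (mem_sdiff.1 (mem_sigma.1 hp).2).2]
  · rintro ⟨S, x⟩ hp
    simp [insert_erase (mem_sigma.1 hp).2]

variable (E : Finset α) {Δ : Finset α → ℝ}

theorem sub_mul_sum_powersetCard_le_of_monotoneOn (hΔ : MonotoneOn Δ ↑E.powerset) (s : ℕ) :
    ((#E : ℝ) - s) * ∑ S ∈ E.powersetCard s, Δ S ≤
      (s + 1) * ∑ S ∈ E.powersetCard (s + 1), Δ S := by
  have hdouble := E.succ_nsmul_sum_powersetCard_succ s Δ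
  rw [nsmul_eq_mul, Nat.cast_add_one] at hdouble
  rw [hdouble, mul_sum]
  refine sum_le_sum fun T hT => ?_
  obtain ⟨hTE, hTcard⟩ := mem_powersetCard.1 hT
  have hcompl : ((#(E \ T) : ℕ) : ℝ) = #E - s := by
    rw [card_sdiff_of_subset hTE, Nat.cast_sub (card_le_card hTE), hTcard]
  rw [← hcompl, ← nsmul_eq_mul, ← sum_const]
  refine sum_le_sum fun x hx => ?_
  obtain ⟨hxE, -⟩ := mem_sdiff.1 hx
  exact hΔ (mem_powerset.2 hTE) (mem_powerset.2 (insert_subset hxE hTE)) (subset_insert x T)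

/-- The function is `|E|!` times the average of `Δ` over the `j`-subsets of `E`. -/
theorem monotoneOn_factorial_mul_sum_powersetCard (hΔ : MonotoneOn Δ ↑E.powerset) :
    MonotoneOn (fun j => (j ! * (#E - j)! : ℝ) * ∑ S ∈ E.powersetCard j, Δ S)
      (Set.Iic #E) := by
  refine monotoneOn_of_le_succ Set.ordConnected_Iic fun j _ _ hj => ?_
  simp only [Order.succ_eq_add_one, Set.mem_Iic] at hj ⊢
  obtain ⟨k, hk⟩ : ∃ k, #E = j + 1 + k := ⟨#E - (j + 1), by omega⟩
  have hstep := sub_mul_sum_powersetCard_le_of_monotoneOn E hΔ j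
  rw [hk, show j + 1 + k - j = k + 1 by omega, show j + 1 + k - (j + 1) = k by omega]
  rw [hk, show ((j + 1 + k : ℕ) : ℝ) - j = k + 1 by push_cast; ring] at hstep
  calc (j ! * (k + 1)! : ℝ) * ∑ S ∈ E.powersetCard j, Δ S
      = (j ! * k ! : ℝ) * ((k + 1) * ∑ S ∈ E.powersetCard j, Δ S) := by
        rw [Nat.factorial_succ]; push_cast; ring
    _ ≤ (j ! * k ! : ℝ) * ((j + 1) * ∑ S ∈ E.powersetCard (j + 1), Δ S) := by
        gcongr
    _ = ((j + 1)! * k ! : ℝ) * ∑ S ∈ E.powersetCard (j + 1), Δ S := by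
        rw [Nat.factorial_succ]; push_cast; ring

theorem sum_powerset_factorial_mul_two_mul_card_sub_mul_nonneg
    (hΔ : MonotoneOn Δ ↑E.powerset) :
    0 ≤ ∑ S ∈ E.powerset, ((#S)! * (#E - #S)! : ℝ) * (2 * #S - #E) * Δ S := by
  rw [sum_powerset]
  refine (sum_range_two_mul_sub_mul_nonneg _
    (monotoneOn_factorial_mul_sum_powersetCard E hΔ)).trans_eq (sum_congr rfl fun j _ => ?_)
  rw [mul_sum, mul_sum]
  refine sum_congr rfl fun S hS => ?_
  rw [(mem_powersetCard.1 hS).2]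
  ring

end LevelSums

noncomputable def shapleyWeight (m s : ℕ) : ℝ :=
  (s ! * (m - s - 1)! : ℝ) / m !

theorem shapleyWeight_nonneg (m s : ℕ) : 0 ≤ shapleyWeight m s := by
  unfold shapleyWeight; positivity

theorem shapley_eq_sum_shapleyWeight {ι : Type*} [DecidableEq ι] (market : Finset ι)
    (v : Finset ι → ℝ) (i : ι) :
    shapley market v i = 1 / v market * ∑ S ∈ (market.erase i).powerset,
      shapleyWeight #market #S * (v (insert i S) - v S) := rfl

theorem shapleyWeight_add_two {n s : ℕ} (hs : s ≤ n) :
    shapleyWeight (n + 2) s = shapleyWeight (n + 1) s / 2 -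
      (s ! * (n - s)! : ℝ) * (2 * s - n) / (2 * (n + 2)!) := by
  obtain ⟨k, rfl⟩ : ∃ k, n = s + k := ⟨n - s, by omega⟩
  unfold shapleyWeight
  rw [show s + k + 2 - s - 1 = k + 1 by omega, show s + k + 1 - s - 1 = k by omega,
    show s + k - s = k by omega, Nat.factorial_succ (s + k + 1), Nat.factorial_succ (s + k),
    Nat.factorial_succ k]
  have : ((s + k)! : ℝ) ≠ 0 := by positivity
  push_cast
  field_simp
  ring

theorem sum_shapleyWeight_add_two_le_half {α : Type*} [DecidableEq α] (E : Finset α)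
    {Δ : Finset α → ℝ} (hΔ : MonotoneOn Δ ↑E.powerset) :
    ∑ S ∈ E.powerset, shapleyWeight (#E + 2) #S * Δ S ≤
      (∑ S ∈ E.powerset, shapleyWeight (#E + 1) #S * Δ S) / 2 := by
  have hdiff : (∑ S ∈ E.powerset, shapleyWeight (#E + 1) #S * Δ S) / 2 -
      ∑ S ∈ E.powerset, shapleyWeight (#E + 2) #S * Δ S =
        1 / (2 * (#E + 2)! : ℝ) *
          ∑ S ∈ E.powerset, ((#S)! * (#E - #S)! : ℝ) * (2 * #S - #E) * Δ S := by
    rw [sum_div, ← sum_sub_distrib, mul_sum]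
    refine sum_congr rfl fun S hS => ?_
    rw [shapleyWeight_add_two (card_le_card (mem_powerset.1 hS))]
    ring
  have hnonneg := mul_nonneg (by positivity : (0 : ℝ) ≤ 1 / (2 * (#E + 2)! : ℝ))
    (sum_powerset_factorial_mul_two_mul_card_sub_mul_nonneg E hΔ)
  linarith

theorem shapley_replication_bound_zero_gain_general {ι : Type*} [DecidableEq ι] (N : Finset ι)
    (i : ι) (hi : i ∈ N) (i' : ι) (hi' : i' ∉ N)
    (NR : Finset ι) (hNR : NR = insert i' N)
    (v : Finset ι → ℝ) (a_i : ℝ)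
    (hsuper : ∀ R Q : Finset ι, R ⊆ Q → ∀ x ∉ Q,
      v (insert x R) - v R ≤ v (insert x Q) - v Q)
    (hvN : 0 < v N)
    (hmarg : ∀ S ⊆ NR.erase i, i' ∈ S → v (insert i S) - v S ≤ a_i)
    (hai : a_i = 0) (hveq : v NR = v N) :
    shapley NR v i ≤ shapley N v i / 2 := by
  set E := N.erase i
  have hi'E : i' ∉ E := fun h => hi' (mem_of_mem_erase h)
  have hNR_erase : NR.erase i = insert i' E := by
    rw [hNR, erase_insert_of_ne (by rintro rfl; exact hi' hi)]
  have hN_card : #N = #E + 1 := (card_erase_add_one hi).symm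
  have hNR_card : #NR = #E + 2 := by rw [hNR, card_insert_of_notMem hi', hN_card]
  have hΔ : MonotoneOn (fun S => v (insert i S) - v S) ↑E.powerset :=
    fun R _ Q hQ hRQ => hsuper R Q hRQ i fun h => notMem_erase i N (mem_powerset.1 hQ h)
  have hreplica : ∑ S ∈ E.powerset, shapleyWeight (#E + 2) #(insert i' S) *
      (v (insert i (insert i' S)) - v (insert i' S)) ≤ 0 := by
    refine sum_nonpos fun S hS => mul_nonpos_of_nonneg_of_nonpos (shapleyWeight_nonneg _ _) ?_
    rw [← hai]
    exact hmarg _ (hNR_erase ▸ insert_subset_insert i' (mem_powerset.1 hS)) (mem_insert_self _ _)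
  rw [shapley_eq_sum_shapleyWeight, shapley_eq_sum_shapleyWeight, hveq, hNR_erase,
    sum_powerset_insert hi'E, hNR_card, hN_card, mul_div_assoc]
  gcongr
  linarith [sum_shapleyWeight_add_two_le_half E hΔ]

/-- corollary: in the setting of the bound on the Shapley value
after replication, if additionally `a_i = 0` and `v(N^R) = v(N)`, then the
normalized Shapley value of `i` after replication is at most half its value
before replication: `φ^R(i) ≤ φ(i)/2`. -/
theorem shapley_replication_bound_zero_gain {ι : Type*} [DecidableEq ι] (N : Finset ι)
    (M : ℕ) (hcard : N.card = M) (hM : 1 ≤ M)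
    (i : ι) (hi : i ∈ N) (i' : ι) (hi' : i' ∉ N)
    (NR : Finset ι) (hNR : NR = insert i' N)
    (v : Finset ι → ℝ) (a_i : ℝ)
    (hsuper : ∀ R Q : Finset ι, R ⊆ Q → ∀ x ∉ Q,
      v (insert x R) - v R ≤ v (insert x Q) - v Q)
    (hvN : 0 < v N)
    (hmarg : ∀ S ⊆ NR.erase i, i' ∈ S → v (insert i S) - v S ≤ a_i)
    (hai : a_i = 0) (hveq : v NR = v N) :
    shapley NR v i ≤ shapley N v i / 2 :=
  shapley_replication_bound_zero_gain_general N i hi i' hi' NR hNR v a_i hsuper hvN hmarg hai hveq
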